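/- Under the Farey configuration (integers k ≥ 1, 1 ≤ l ≤ k, c_1 ≥ 1, c_2,…,c_l ≥ 2, c_l > 2, and c_{l+1} = ⋯ = c_k = 2), the denominator identity for the q-deformed Farey sum of left q-deformed rational numbers holds: E^♭_{k−1}(c_2,…,c_k)_q = q^{k−l+1}·E^♭_{l−1}(c_2,…,c_{l−1}, c_l − 1)_q + E^♭_{k−2}(c_2,…,c_{k−1})_q, where the conventions E^♭_0()_q = 1 and E^♭_{−1}()_q = 1 − q are used when l = 1 or k ≤ 2. Equivalently, if α = [[c_1,…,c_k]] is the Farey sum of β = [[c_1,…,c_l − 1]] and γ = [[c_1,…,c_{k−1}]], then the denominators of the left q-deformed rationals satisfy S^♭_α(q) = q^{k−l+1}·S^♭_β(q) + S^♭_γ(q). -/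

import Mathlib

noncomputable section

/-- The field ℚ(q) of rational functions over ℚ. -/
abbrev K : Type := RatFunc ℚ

/-- The variable q. -/
def q : K := RatFunc.X

/-- Right q-integer `[n]^♯` with deformation parameter `x`. -/
def qsX (x : K) (n : ℤ) : K := (1 - x ^ n) / (1 - x)

/-- Left q-integer `[n]^♭` with deformation parameter `x`. -/
def qfX (x : K) (n : ℤ) : K := (1 - x ^ (n - 1) + x ^ n - x ^ (n + 1)) / (1 - x)

/-- Right q-integer `[n]^♯_q`. -/
def qs (n : ℤ) : K := qsX q n

/-- Left q-integer `[n]^♭_q`. -/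
def qf (n : ℤ) : K := qfX q n

/-- Right q-deformed Euler continuant `E^♯` (first-row expansion of the
tridiagonal determinant), with parameter `x`. -/
def EsharpX (x : K) : List ℤ → K
  | [] => 1
  | [c] => qsX x c
  | c :: d :: rest => qsX x c * EsharpX x (d :: rest) - x ^ (c - 1) * EsharpX x rest

/-- Left q-deformed Euler continuant `E^♭` (first-row expansion of the
tridiagonal determinant whose (k,k) entry is the left q-integer), with parameter `x`. -/
def EflatX (x : K) : List ℤ → K
  | [] => 1
  | [c] => qfX x c
  | c :: d :: rest => qsX x c * EflatX x (d :: rest) - x ^ (c - 1) * EflatX x rest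

def Esharp (L : List ℤ) : K := EsharpX q L

def Eflat (L : List ℤ) : K := EflatX q L

/-- `E^♯_{j-1}(d_2,…,d_j)` for the input list `(d_1,…,d_j)`, with the
convention `E^♯_{-1}() = 0` when the list is empty. -/
def EsharpD : List ℤ → K
  | [] => 0
  | _ :: rest => Esharp rest

/-- `E^♭_{j-1}(d_2,…,d_j)` for the input list `(d_1,…,d_j)`, with the
convention `E^♭_{-1}() = 1 - q` when the list is empty. -/
def EflatD : List ℤ → K
  | [] => 1 - q
  | _ :: rest => Eflat rest

/-- Left q-deformed negative continued fraction `[[c_1,…,c_k]]^♭_q`. -/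
def nflat : List ℤ → K
  | [] => 0
  | [c] => qf c
  | c :: d :: rest => qs c - q ^ (c - 1) / nflat (d :: rest)

/-- Right q-deformed negative continued fraction `[[c_1,…,c_k]]^♯_q`. -/
def nsharp : List ℤ → K
  | [] => 0
  | [c] => qs c
  | c :: d :: rest => qs c - q ^ (c - 1) / nsharp (d :: rest)

/-- Left q-deformed regular continued fraction, with alternating parameter `x`, `x⁻¹`. -/
def regFlatX : K → List ℤ → K
  | _, [] => 0
  | x, [a] => qfX x a
  | x, a :: d :: rest => qsX x a + x ^ a / regFlatX x⁻¹ (d :: rest)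

/-- Left q-deformed regular continued fraction `[a_1,…,a_{2m}]^♭_q`. -/
def regFlat (L : List ℤ) : K := regFlatX q L

/-- Classical negative continued fraction `[[c_1,…,c_k]] ∈ ℚ`. -/
def negCF : List ℤ → ℚ
  | [] => 0
  | [c] => c
  | c :: d :: rest => c - 1 / negCF (d :: rest)

/-- Classical regular continued fraction `[a_1,…,a_{2m}] ∈ ℚ`. -/
def regCF : List ℤ → ℚ
  | [] => 0
  | [a] => a
  | a :: d :: rest => a + 1 / regCF (d :: rest)

/-- The matrix σ_{1,q} as an invertible 2×2 matrix over ℚ(q). -/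
def σ1 : (Matrix (Fin 2) (Fin 2) K)ˣ where
  val := !![q⁻¹, -q⁻¹; 0, 1]
  inv := !![q, 1; 0, 1]
  val_inv := by
    have hq : (q : K) ≠ 0 := RatFunc.X_ne_zero
    ext i j
    fin_cases i <;> fin_cases j <;>
      simp [Matrix.mul_apply, Fin.sum_univ_two, inv_mul_cancel₀ hq]
  inv_val := by
    have hq : (q : K) ≠ 0 := RatFunc.X_ne_zero
    ext i j
    fin_cases i <;> fin_cases j <;>
      simp [Matrix.mul_apply, Fin.sum_univ_two, mul_inv_cancel₀ hq]

/-- The matrix σ_{2,q} as an invertible 2×2 matrix over ℚ(q). -/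
def σ2 : (Matrix (Fin 2) (Fin 2) K)ˣ where
  val := !![1, 0; 1, q⁻¹]
  inv := !![1, 0; -q, q]
  val_inv := by
    have hq : (q : K) ≠ 0 := RatFunc.X_ne_zero
    ext i j
    fin_cases i <;> fin_cases j <;>
      simp [Matrix.mul_apply, Fin.sum_univ_two, inv_mul_cancel₀ hq]
  inv_val := by
    have hq : (q : K) ≠ 0 := RatFunc.X_ne_zero
    ext i j
    fin_cases i <;> fin_cases j <;>
      simp [Matrix.mul_apply, Fin.sum_univ_two, mul_inv_cancel₀ hq]

/-- The matrix S_q as an invertible 2×2 matrix over ℚ(q). -/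
def Sq : (Matrix (Fin 2) (Fin 2) K)ˣ where
  val := !![0, -q⁻¹; 1, 0]
  inv := !![0, 1; -q, 0]
  val_inv := by
    have hq : (q : K) ≠ 0 := RatFunc.X_ne_zero
    ext i j
    fin_cases i <;> fin_cases j <;>
      simp [Matrix.mul_apply, Fin.sum_univ_two, inv_mul_cancel₀ hq]
  inv_val := by
    have hq : (q : K) ≠ 0 := RatFunc.X_ne_zero
    ext i j
    fin_cases i <;> fin_cases j <;>
      simp [Matrix.mul_apply, Fin.sum_univ_two, mul_inv_cancel₀ hq]

/-- The product σ_{1,q}^{-c_1}·S_q·σ_{1,q}^{-c_2}·S_q⋯σ_{1,q}^{-c_k}·S_q. -/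
def prodCS : List ℤ → (Matrix (Fin 2) (Fin 2) K)ˣ
  | [] => 1
  | c :: rest => σ1 ^ (-c) * Sq * prodCS rest

/-- The product σ_{1,q}^{-a_1}·σ_{2,q}^{a_2}⋯σ_{1,q}^{-a_{2m-1}}·σ_{2,q}^{a_{2m}}. -/
def prodReg : List ℤ → (Matrix (Fin 2) (Fin 2) K)ˣ
  | [] => 1
  | [a] => σ1 ^ (-a)
  | a :: b :: rest => σ1 ^ (-a) * σ2 ^ b * prodReg rest

/-- The sum a_2 + a_4 + ⋯ of the even-indexed entries. -/
def evenSum : List ℤ → ℤ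
  | [] => 0
  | [_] => 0
  | _ :: b :: rest => b + evenSum rest

/-- Möbius action of a 2×2 matrix on ℚ(q). -/
def mobius (A : Matrix (Fin 2) (Fin 2) K) (x : K) : K :=
  (A 0 0 * x + A 0 1) / (A 1 0 * x + A 1 1)

-- ===== auxiliary lemmas =====

lemma q_ne_zero : (q : K) ≠ 0 := RatFunc.X_ne_zero

lemma one_sub_q_ne_zero : (1 : K) - q ≠ 0 := by
  have h : (q : K) ≠ 1 := by
    unfold q
    intro h
    have h2 : (Polynomial.X : Polynomial ℚ) = 1 :=
      IsFractionRing.injective (Polynomial ℚ) (RatFunc ℚ)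
        (by simpa [RatFunc.algebraMap_X, map_one] using h)
    have := congrArg (Polynomial.eval 0) h2
    simp at this
  intro h2
  exact h (by linear_combination -h2)

lemma zp1 (c : ℤ) : (q : K) ^ c = q ^ (c - 1) * q := by
  rw [← zpow_add_one₀ q_ne_zero]
  congr 1
  ring

lemma qs_step (c : ℤ) : qsX q c = qsX q (c - 1) + q ^ (c - 1) := by
  unfold qsX
  rw [zp1 c]
  field_simp [one_sub_q_ne_zero]
  ring

lemma qf_eq (c : ℤ) : qfX q c = qsX q c - q ^ (c - 1) * (1 - q) := by
  have h1 : (q : K) ^ (c + 1) = q ^ (c - 1) * q * q := by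
    rw [← zpow_add_one₀ q_ne_zero, ← zpow_add_one₀ q_ne_zero]
    congr 1
    ring
  unfold qfX qsX
  rw [h1, zp1 c]
  field_simp [one_sub_q_ne_zero]
  ring

lemma qf_rec (c : ℤ) : qfX q c = q * qfX q (c - 1) + 1 := by
  have h1 : (q : K) ^ (c + 1) = q ^ (c - 1 - 1) * q * q * q := by
    rw [← zpow_add_one₀ q_ne_zero, ← zpow_add_one₀ q_ne_zero, ← zpow_add_one₀ q_ne_zero]
    congr 1
    ring
  have h2 : (q : K) ^ c = q ^ (c - 1 - 1) * q * q := by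
    rw [← zpow_add_one₀ q_ne_zero, ← zpow_add_one₀ q_ne_zero]
    congr 1
    ring
  have h3 : (q : K) ^ (c - 1 + 1) = q ^ c := by
    congr 1
    ring
  have h4 : (q : K) ^ (c - 1) = q ^ (c - 1 - 1) * q := zp1 (c - 1)
  unfold qfX
  rw [h3, h1, h2, h4]
  field_simp [one_sub_q_ne_zero]
  ring

lemma qs_two : qsX q 2 = 1 + q := by
  have h : (q : K) ^ (2 : ℤ) = q * q := by
    rw [show (2:ℤ) = 1 + 1 from rfl, zpow_add_one₀ q_ne_zero, zpow_one]
  unfold qsX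
  rw [h]
  field_simp [one_sub_q_ne_zero]
  ring

lemma qf_two : qfX q 2 = 1 + q ^ 2 := by
  rw [qf_eq, qs_two, show (2:ℤ) - 1 = 1 from rfl, zpow_one]
  ring

theorem L1 : ∀ (D : List ℤ) (b c : ℤ),
    Esharp (D ++ [b, c]) = qsX q c * Esharp (D ++ [b]) - q ^ (b - 1) * Esharp D
  | [], b, c => by
      simp only [List.nil_append, Esharp, EsharpX]
      ring
  | [a], b, c => by
      simp only [List.cons_append, List.nil_append, Esharp, EsharpX]
      ring
  | a :: a' :: D, b, c => by
      have ih1 := L1 (a' :: D) b c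
      have ih2 := L1 D b c
      simp only [List.cons_append, List.append_eq, Esharp, EsharpX] at ih1 ih2 ⊢
      rw [ih1, ih2]
      ring

theorem L2 : ∀ (D : List ℤ) (c : ℤ),
    Eflat (D ++ [c]) = Esharp (D ++ [c]) - q ^ (c - 1) * (1 - q) * Esharp D
  | [], c => by
      simp only [List.nil_append, Eflat, Esharp, EflatX, EsharpX]
      rw [qf_eq]
      ring
  | [a], c => by
      simp only [List.cons_append, List.nil_append, Eflat, Esharp, EflatX, EsharpX]
      rw [qf_eq]
      ring
  | a :: a' :: D, c => by
      have ih1 := L2 (a' :: D) c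
      have ih2 := L2 D c
      simp only [List.cons_append, List.append_eq, Eflat, Esharp, EflatX, EsharpX] at ih1 ih2 ⊢
      rw [ih1, ih2]
      ring

theorem Qlem : ∀ (D : List ℤ) (c : ℤ),
    Esharp (D ++ [c]) = Esharp (D ++ [c - 1]) + q ^ (c - 1) * Esharp D
  | [], c => by
      simp only [List.nil_append, Esharp, EsharpX]
      rw [qs_step c]
      ring
  | [a], c => by
      simp only [List.cons_append, List.nil_append, Esharp, EsharpX]
      rw [qs_step c]
      ring
  | a :: a' :: D, c => by
      have ih1 := Qlem (a' :: D) c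
      have ih2 := Qlem D c
      simp only [List.cons_append, List.append_eq, Esharp, EsharpX] at ih1 ih2 ⊢
      rw [ih1, ih2]
      ring

theorem Blem : ∀ (D : List ℤ) (c : ℤ),
    Eflat (D ++ [c]) = q * Eflat (D ++ [c - 1]) + Eflat D
  | [], c => by
      simp only [List.nil_append, Eflat, EflatX]
      rw [qf_rec c]
  | [a], c => by
      simp only [List.cons_append, List.nil_append, Eflat, EflatX]
      rw [qf_rec c, qf_eq a]
      ring
  | a :: a' :: D, c => by
      have ih1 := Blem (a' :: D) c
      have ih2 := Blem D c
      simp only [List.cons_append, List.append_eq, Eflat, EflatX] at ih1 ih2 ⊢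
      rw [ih1, ih2]
      ring

lemma rep_succ (M : List ℤ) (n : ℕ) :
    M ++ List.replicate (n + 1) 2 = (M ++ List.replicate n 2) ++ [2] := by
  rw [List.replicate_succ', List.append_assoc]

theorem T0 (M : List ℤ) : ∀ n : ℕ,
    Esharp (M ++ List.replicate (n + 1) 2)
      = Esharp (M ++ List.replicate n 2) + q ^ n * (Esharp (M ++ [2]) - Esharp M) := by
  intro n
  induction n with
  | zero =>
      simp only [List.replicate_succ, List.replicate_zero, List.append_nil, pow_zero, one_mul]
      ring
  | succ n ih =>
      have key := L1 (M ++ List.replicate n 2) 2 2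
      have e1 : (M ++ List.replicate n 2) ++ [2, 2] = M ++ List.replicate (n + 1 + 1) 2 := by
        rw [rep_succ M (n+1), rep_succ M n]
        simp
      have e2 : (M ++ List.replicate n 2) ++ [2] = M ++ List.replicate (n + 1) 2 :=
        (rep_succ M n).symm
      rw [e1, e2, qs_two, show (2:ℤ) - 1 = 1 from rfl, zpow_one] at key
      rw [key, ih]
      ring

lemma SA_concat (D : List ℤ) (c : ℤ) :
    Esharp (D ++ [c, 2]) = Esharp (D ++ [c]) + q * Eflat (D ++ [c - 1]) := by
  have l1 := L1 D c 2
  have l2b := L2 D (c - 1)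
  have qq := Qlem D c
  rw [qs_two] at l1
  rw [show (c:ℤ) - 1 - 1 = c - 2 from by ring] at l2b
  have hc : (q : K) ^ (c - 1) = q ^ (c - 2) * q := by
    rw [← zpow_add_one₀ q_ne_zero]; congr 1; ring
  rw [hc] at l1 qq
  linear_combination l1 - q * l2b + q * qq

lemma base_concat (D : List ℤ) (c : ℤ) :
    Eflat (D ++ [c, 2]) = q ^ 2 * Eflat (D ++ [c - 1]) + Eflat (D ++ [c]) := by
  have l1 := L1 D c 2
  have l2 := L2 (D ++ [c]) 2
  have l2b := L2 D (c - 1)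
  have l2c := L2 D c
  have qq := Qlem D c
  rw [qs_two] at l1
  simp only [List.append_assoc, List.cons_append, List.nil_append] at l2
  rw [show (2:ℤ) - 1 = 1 from rfl, zpow_one] at l2
  rw [show (c:ℤ) - 1 - 1 = c - 2 from by ring] at l2b
  have hc : (q : K) ^ (c - 1) = q ^ (c - 2) * q := by
    rw [← zpow_add_one₀ q_ne_zero]; congr 1; ring
  rw [hc] at l1 l2c qq
  linear_combination l2 + l1 - q ^ 2 * l2b - l2c + q ^ 2 * qq

theorem MF (M : List ℤ) (A : K)
    (hA : Esharp (M ++ [2]) = Esharp M + q * A)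
    (hB : Eflat (M ++ [2]) = q ^ 2 * A + Eflat M) :
    ∀ n : ℕ, Eflat (M ++ List.replicate (n + 1) 2)
      = q ^ (n + 2) * A + Eflat (M ++ List.replicate n 2) := by
  intro n
  cases n with
  | zero =>
      simpa [List.replicate_succ, List.replicate_zero] using hB
  | succ n =>
      have l2a := L2 (M ++ List.replicate (n + 1) 2) 2
      have l2b := L2 (M ++ List.replicate n 2) 2
      rw [← rep_succ M (n + 1)] at l2a
      rw [← rep_succ M n] at l2b
      rw [show (2:ℤ) - 1 = 1 from rfl, zpow_one] at l2a l2b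
      have t1 := T0 M (n + 1)
      have t2 := T0 M n
      linear_combination l2a - l2b + t1 - (q * (1 - q)) * t2 + q ^ (n + 2) * hA

lemma gl (l : List ℤ) (a : ℤ) : (l ++ [a]).getLast! = a :=
  List.getLast!_of_getLast? List.getLast?_concat

lemma hA_nil : Esharp (([] : List ℤ) ++ [2]) = Esharp ([] : List ℤ) + q * 1 := by
  simp only [List.nil_append, Esharp, EsharpX, qs_two]
  ring

lemma hB_nil : Eflat (([] : List ℤ) ++ [2]) = q ^ 2 * 1 + Eflat ([] : List ℤ) := by
  simp only [List.nil_append, Eflat, EflatX, qf_two]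
  ring
/-- denominator identity for the q-deformed Farey sum of left q-deformed
rational numbers.  Here `L = (c_1,…,c_l)` with c_1 ≥ 1, c_2,…,c_l ≥ 2, c_l > 2, and
the full sequence is `L ++ (2,…,2)` with `n = k - l` copies of 2; the denominator of
`[[d_1,…,d_j]]^♭_q` is `E^♭_{j-1}(d_2,…,d_j)` (with `E^♭_{-1}() = 1 - q`). -/
theorem Eflat_farey_denominator (L : List ℤ) (hL : L ≠ [])
    (h1 : 1 ≤ L.head!) (h2 : ∀ x ∈ L.tail, 2 ≤ x) (h3 : 2 < L.getLast!) (n : ℕ) :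
    EflatD (L ++ List.replicate n 2)
      = q ^ ((n : ℤ) + 1) * EflatD (L.dropLast ++ [L.getLast! - 1])
        + EflatD ((L ++ List.replicate n 2).dropLast) := by
  cases L with
  | nil => exact absurd rfl hL
  | cons c M =>
    rcases M.eq_nil_or_concat with rfl | ⟨D, d, hM⟩
    · -- L = [c]
      have hgl1 : ([c] : List ℤ).getLast! = c := by simpa using gl [] c
      cases n with
      | zero =>
          simp only [List.replicate_zero, List.append_nil, List.dropLast_singleton,
            hgl1, List.nil_append, EflatD, Eflat, EflatX]
          rw [show ((0:ℕ):ℤ) + 1 = 1 from by norm_num, zpow_one]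
          ring
      | succ m =>
          have hz : (q : K) ^ ((↑(m+1):ℤ) + 1) = q ^ (m+2) := by
            rw [show ((↑(m+1):ℤ) + 1) = ((m+2:ℕ):ℤ) from by push_cast; ring, zpow_natCast]
          have hdl : (([c] : List ℤ) ++ List.replicate (m+1) 2).dropLast
              = [c] ++ List.replicate m 2 := by
            rw [rep_succ [c] m, List.dropLast_concat]
          have key := MF [] 1 hA_nil hB_nil m
          simp only [List.nil_append] at key
          rw [hgl1, hdl, hz]
          simp only [List.singleton_append, List.dropLast_singleton, List.nil_append, EflatD]
          simp only [Eflat, EflatX] at key ⊢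
          rw [key]
    · subst hM
      simp only [List.concat_eq_append] at *
      have hgl : (c :: (D ++ [d])).getLast! = d := by
        rw [show c :: (D ++ [d]) = (c :: D) ++ [d] from by simp]
        exact gl _ _
      have hdl : (c :: (D ++ [d])).dropLast = c :: D := by
        rw [show c :: (D ++ [d]) = (c :: D) ++ [d] from by simp, List.dropLast_concat]
      cases n with
      | zero =>
          simp only [List.replicate_zero, List.append_nil]
          rw [hgl, hdl]
          simp only [List.cons_append, EflatD]
          rw [show ((0:ℕ):ℤ) + 1 = 1 from by norm_num, zpow_one]
          exact Blem D d
      | succ m =>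
          have hz : (q : K) ^ ((↑(m+1):ℤ) + 1) = q ^ (m+2) := by
            rw [show ((↑(m+1):ℤ) + 1) = ((m+2:ℕ):ℤ) from by push_cast; ring, zpow_natCast]
          have hdl2 : ((c :: (D ++ [d])) ++ List.replicate (m+1) 2).dropLast
              = (c :: (D ++ [d])) ++ List.replicate m 2 := by
            rw [rep_succ _ m, List.dropLast_concat]
          have hA : Esharp ((D ++ [d]) ++ [2]) = Esharp (D ++ [d]) + q * Eflat (D ++ [d-1]) := by
            simpa [List.append_assoc] using SA_concat D d
          have hB : Eflat ((D ++ [d]) ++ [2]) = q ^ 2 * Eflat (D ++ [d-1]) + Eflat (D ++ [d]) := by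
            simpa [List.append_assoc] using base_concat D d
          have key := MF (D ++ [d]) (Eflat (D ++ [d-1])) hA hB m
          rw [hgl, hdl, hdl2, hz]
          simp only [List.cons_append, EflatD]
          simp only [Eflat] at key ⊢
          rw [key]
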